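/- Let 1 < q < ∞, v ∈ ℝⁿ with vᵢ > 0 for all i, and 0 < λ < ‖v‖_{q̄}. Define φ(c) = λ(Σᵢ (ωᵢ^{−1}(c))^q)^{(1−q)/q} − c for c ≥ 0, and let c̲ ≤ c̄ be as above. Then φ has exactly one root c* in [0, ∞), this root lies in [c̲, c̄], and the unique vector x with 0 < xᵢ < vᵢ satisfying xᵢ + c*·xᵢ^{q−1} = vᵢ for all i is the minimizer of g(x) = (1/2)‖x − v‖₂² + λ‖x‖_q. -/

import Mathlib

open scoped BigOperators

/-- The vector ℓq norm for a real exponent `q`. -/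
noncomputable def lqNormR {n : ℕ} (q : ℝ) (x : Fin n → ℝ) : ℝ :=
  (∑ i, |x i| ^ q) ^ (1 / q)

/-- The objective `g(x) = (1/2)‖x − v‖₂² + λ‖x‖_q`. -/
noncomputable def gObjR {n : ℕ} (q : ℝ) (lam : ℝ) (v x : Fin n → ℝ) : ℝ :=
  (1 / 2) * ∑ i, (x i - v i) ^ 2 + lam * lqNormR q x

/-!
At a positive point `x` the stationarity conditions of `g` read `x + c x^{q-1} = v` with
`c = λ‖x‖_q^{1-q}`, so the roots of `φ` are the positive stationary points of `g`, parametrised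
by `c`. Hölder's inequality makes `λ x^{q-1}/‖x‖_q^{q-1}` a subgradient of `λ‖·‖_q` at `x`, so
such a point is a strong minimizer, `g y ≥ g x + ½‖y - x‖₂²`; two roots therefore give the same
point and hence the same `c`. For existence, `φ(c)` has the sign of `λ - ‖v - ω⁻¹(c)‖_q̄`.
As `ω⁻¹(c)` decreases in `c` and `ωᵢ⁻¹(cᵢ) = ε vᵢ`, where `‖v - ε v‖_q̄ = λ`, this gives
`φ(c̲) ≥ 0 ≥ φ(c̄)`, and `ω⁻¹` is Lipschitz in `c`, so the intermediate value theorem applies.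
-/

open Finset

section RootEquation

variable {q c c₁ c₂ a₁ a₂ w : ℝ}

lemma root_antitone (hq : 1 < q) (hc₁ : 0 ≤ c₁) (hc : c₁ ≤ c₂) (ha₁ : 0 < a₁)
    (h₁ : a₁ + c₁ * a₁ ^ (q - 1) = w) (h₂ : a₂ + c₂ * a₂ ^ (q - 1) = w) : a₂ ≤ a₁ := by
  by_contra! h
  have : c₁ * a₁ ^ (q - 1) ≤ c₂ * a₂ ^ (q - 1) :=
    mul_le_mul hc (Real.rpow_le_rpow ha₁.le h.le (by linarith))
      (Real.rpow_nonneg ha₁.le _) (hc₁.trans hc)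
  linarith

lemma root_unique (hq : 1 < q) (hc : 0 ≤ c) (ha₁ : 0 < a₁) (ha₂ : 0 < a₂)
    (h₁ : a₁ + c * a₁ ^ (q - 1) = w) (h₂ : a₂ + c * a₂ ^ (q - 1) = w) : a₁ = a₂ :=
  le_antisymm (root_antitone hq hc le_rfl ha₂ h₂ h₁) (root_antitone hq hc le_rfl ha₁ h₁ h₂)

lemma root_sub_le (hq : 1 < q) (hc₁ : 0 ≤ c₁) (hc : c₁ ≤ c₂) (ha₁ : 0 < a₁) (ha₂ : 0 < a₂)
    (ha₂w : a₂ ≤ w) (h₁ : a₁ + c₁ * a₁ ^ (q - 1) = w) (h₂ : a₂ + c₂ * a₂ ^ (q - 1) = w) :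
    a₁ - a₂ ≤ (c₂ - c₁) * w ^ (q - 1) := by
  have ha : a₂ ≤ a₁ := root_antitone hq hc₁ hc ha₁ h₁ h₂
  have h₃ : c₁ * a₂ ^ (q - 1) ≤ c₁ * a₁ ^ (q - 1) :=
    mul_le_mul_of_nonneg_left (Real.rpow_le_rpow ha₂.le ha (by linarith)) hc₁
  have h₄ : (c₂ - c₁) * a₂ ^ (q - 1) ≤ (c₂ - c₁) * w ^ (q - 1) :=
    mul_le_mul_of_nonneg_left (Real.rpow_le_rpow ha₂.le ha₂w (by linarith)) (by linarith)
  linarith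

lemma lipschitzOnWith_root (hq : 1 < q) {f : ℝ → ℝ}
    (hf : ∀ c, 0 ≤ c → f c ∈ Set.Ioc 0 w ∧ f c + c * f c ^ (q - 1) = w) :
    LipschitzOnWith (w ^ (q - 1)).toNNReal f (Set.Ici 0) := by
  refine LipschitzOnWith.of_le_add_mul' _ fun c₁ hc₁ c₂ hc₂ => ?_
  obtain ⟨⟨hf₁, -⟩, h₁⟩ := hf c₁ hc₁
  obtain ⟨⟨hf₂, hf₂w⟩, h₂⟩ := hf c₂ hc₂
  have hw : 0 ≤ w ^ (q - 1) := Real.rpow_nonneg (hf₂.le.trans hf₂w) _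
  rw [Real.dist_eq]
  rcases le_total c₁ c₂ with h | h
  · have := root_sub_le hq hc₁ h hf₁ hf₂ hf₂w h₁ h₂
    rw [abs_of_nonpos (sub_nonpos.2 h)]
    linarith
  · have := root_antitone hq hc₂ h hf₂ h₂ h₁
    nlinarith [mul_nonneg hw (abs_nonneg (c₁ - c₂))]

end RootEquation

section LqNorm

variable {n : ℕ} {p : ℝ} {x y : Fin n → ℝ}

lemma lqNormR_of_nonneg (hx : ∀ i, 0 ≤ x i) : lqNormR p x = (∑ i, x i ^ p) ^ (1 / p) := by
  simp only [lqNormR, abs_of_nonneg (hx _)]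

lemma lqNormR_const_mul (hp : 0 < p) {t : ℝ} (ht : 0 ≤ t) :
    lqNormR p (fun i => t * x i) = t * lqNormR p x := by
  simp only [lqNormR, abs_mul, abs_of_nonneg ht, Real.mul_rpow ht (abs_nonneg _), ← mul_sum]
  rw [Real.mul_rpow (by positivity) (by positivity), one_div, Real.rpow_rpow_inv ht hp.ne']

lemma lqNormR_le_lqNormR (hp : 0 ≤ p) (h : ∀ i, |x i| ≤ |y i|) : lqNormR p x ≤ lqNormR p y :=
  Real.rpow_le_rpow (by positivity)
    (sum_le_sum fun i _ => Real.rpow_le_rpow (abs_nonneg _) (h i) hp) (by positivity)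

lemma sum_mul_le_lqNormR_mul_lqNormR {r : ℝ} (hpr : p.HolderConjugate r) :
    ∑ i, x i * y i ≤ lqNormR p x * lqNormR r y :=
  Real.inner_le_Lp_mul_Lq univ x y hpr

lemma lqNormR_rpow_sub_one {q : ℝ} (hq : 1 < q) (hx : ∀ i, 0 ≤ x i) :
    lqNormR (q / (q - 1)) (fun i => x i ^ (q - 1)) = (∑ i, x i ^ q) ^ ((q - 1) / q) := by
  rw [lqNormR_of_nonneg fun i => Real.rpow_nonneg (hx i) _, one_div_div]
  congr 1
  refine sum_congr rfl fun i _ => ?_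
  rw [← Real.rpow_mul (hx i), mul_div_cancel₀ _ (by linarith : q - 1 ≠ 0)]

end LqNorm

section Minimizer

variable {n : ℕ} [NeZero n] {q lam c : ℝ} {v x : Fin n → ℝ}

theorem gObjR_add_half_sum_sq_le (hq : 1 < q) (hlam : 0 ≤ lam) (hx : ∀ i, 0 < x i)
    (heq : ∀ i, x i + c * x i ^ (q - 1) = v i)
    (hc : c = lam * (∑ i, x i ^ q) ^ ((1 - q) / q)) (y : Fin n → ℝ) :
    gObjR q lam v x + (1 / 2) * ∑ i, (y i - x i) ^ 2 ≤ gObjR q lam v y := by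
  set A := ∑ i, x i ^ q
  have hA : 0 < A := sum_pos (fun i _ => Real.rpow_pos_of_pos (hx i) _) univ_nonempty
  have hc0 : 0 ≤ c := hc ▸ by positivity
  have hcA : c * A ^ ((q - 1) / q) = lam := by
    rw [hc, mul_assoc, ← Real.rpow_add hA, ← add_div, sub_add_sub_cancel', sub_self,
      zero_div, Real.rpow_zero, mul_one]
  have hcA' : c * A = lam * lqNormR q x := by
    rw [lqNormR_of_nonneg fun i => (hx i).le, ← hcA, mul_assoc]
    congr 1
    rw [← Real.rpow_add hA, ← add_div, sub_add_cancel, div_self (by linarith), Real.rpow_one]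
  have hsub : c * ∑ i, x i ^ (q - 1) * y i ≤ lam * lqNormR q y := by
    calc c * ∑ i, x i ^ (q - 1) * y i
        ≤ c * (lqNormR (q / (q - 1)) (fun i => x i ^ (q - 1)) * lqNormR q y) :=
          mul_le_mul_of_nonneg_left (sum_mul_le_lqNormR_mul_lqNormR
            (Real.HolderConjugate.conjExponent hq).symm) hc0
      _ = lam * lqNormR q y := by
          rw [lqNormR_rpow_sub_one hq fun i => (hx i).le, ← mul_assoc, hcA]
  have hlin : ∑ i, (x i - v i) * (y i - x i) = c * A - c * ∑ i, x i ^ (q - 1) * y i := by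
    simp only [A, mul_sum, ← sum_sub_distrib]
    refine sum_congr rfl fun i _ => ?_
    have hxq : x i ^ (q - 1) * x i = x i ^ q := by
      rw [← Real.rpow_add_one (hx i).ne', sub_add_cancel]
    linear_combination (y i - x i) * heq i + c * hxq
  have hexp : (1 / 2) * ∑ i, (y i - v i) ^ 2 = (1 / 2) * ∑ i, (x i - v i) ^ 2
      + ∑ i, (x i - v i) * (y i - x i) + (1 / 2) * ∑ i, (y i - x i) ^ 2 := by
    simp only [mul_sum, ← sum_add_distrib]
    exact sum_congr rfl fun i _ => by ring
  unfold gObjR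
  linarith

end Minimizer

def IsOmegaInv {n : ℕ} (q : ℝ) (v : Fin n → ℝ) (w : Fin n → ℝ → ℝ) : Prop :=
  ∀ i, ∀ c : ℝ, 0 ≤ c → w i c ∈ Set.Ioc (0 : ℝ) (v i) ∧ w i c + c * w i c ^ (q - 1) = v i

noncomputable def phiR {n : ℕ} (q lam : ℝ) (w : Fin n → ℝ → ℝ) (c : ℝ) : ℝ :=
  lam * (∑ i, w i c ^ q) ^ ((1 - q) / q) - c

section Phi

variable {n : ℕ} [NeZero n] {q lam c : ℝ} {v : Fin n → ℝ} {w : Fin n → ℝ → ℝ}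

lemma IsOmegaInv.sum_rpow_pos (hw : IsOmegaInv q v w) (hc : 0 ≤ c) : 0 < ∑ i, w i c ^ q :=
  sum_pos (fun i _ => Real.rpow_pos_of_pos (hw i c hc).1.1 _) univ_nonempty

lemma phiR_eq_mul (hq : 1 < q) (hw : IsOmegaInv q v w) (hc : 0 ≤ c) :
    phiR q lam w c = (lam - lqNormR (q / (q - 1)) (fun i => v i - w i c)) *
      (∑ i, w i c ^ q) ^ ((1 - q) / q) := by
  have hS := hw.sum_rpow_pos hc
  have hnorm : lqNormR (q / (q - 1)) (fun i => v i - w i c) =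
      c * (∑ i, w i c ^ q) ^ ((q - 1) / q) := by
    rw [← lqNormR_rpow_sub_one hq fun i => (hw i c hc).1.1.le,
      ← lqNormR_const_mul (div_pos (by linarith) (by linarith)) hc]
    congr 1
    funext i
    linarith [(hw i c hc).2]
  rw [hnorm, sub_mul, mul_assoc, ← Real.rpow_add hS, ← add_div, sub_add_sub_cancel', sub_self,
    zero_div, Real.rpow_zero, mul_one]
  rfl

lemma continuousOn_phiR (hq : 1 < q) (hw : IsOmegaInv q v w) :
    ContinuousOn (phiR q lam w) (Set.Ici 0) := by
  have hcont : ∀ i, ContinuousOn (w i) (Set.Ici 0) := fun i =>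
    (lipschitzOnWith_root hq fun c hc => hw i c hc).continuousOn
  refine (continuousOn_const.mul (ContinuousOn.rpow_const ?_ fun c hc => ?_)).sub continuousOn_id
  · exact continuousOn_finsetSum _ fun i _ =>
      (hcont i).rpow_const fun _ _ => Or.inr (by linarith)
  · exact Or.inl (hw.sum_rpow_pos hc).ne'

lemma exists_phiR_eq_zero (hq : 1 < q) (hw : IsOmegaInv q v w) {a b : ℝ} {t : Fin n → ℝ}
    (ha : 0 ≤ a) (hab : a ≤ b) (hta : ∀ i, t i ≤ w i a) (htb : ∀ i, w i b ≤ t i)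
    (ht : lqNormR (q / (q - 1)) (fun i => v i - t i) = lam) :
    ∃ c ∈ Set.Icc a b, phiR q lam w c = 0 := by
  have hb : 0 ≤ b := ha.trans hab
  have hp : 0 ≤ q / (q - 1) := div_nonneg (by linarith) (by linarith)
  have hφa : 0 ≤ phiR q lam w a := by
    refine (phiR_eq_mul hq hw ha).symm ▸ mul_nonneg ?_
      (Real.rpow_nonneg (hw.sum_rpow_pos ha).le _)
    refine sub_nonneg.2 (ht ▸ lqNormR_le_lqNormR hp fun i => ?_)
    have := (hw i a ha).1.2
    rw [abs_of_nonneg (by linarith), abs_of_nonneg (by linarith [hta i])]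
    linarith [hta i]
  have hφb : phiR q lam w b ≤ 0 := by
    refine (phiR_eq_mul hq hw hb).symm ▸ mul_nonpos_of_nonpos_of_nonneg ?_
      (Real.rpow_nonneg (hw.sum_rpow_pos hb).le _)
    refine sub_nonpos.2 (ht ▸ lqNormR_le_lqNormR hp fun i => ?_)
    have := (hw i a ha).1.2
    rw [abs_of_nonneg (by linarith [hta i]), abs_of_nonneg (by linarith [hta i, htb i])]
    linarith [htb i]
  exact intermediate_value_Icc' hab ((continuousOn_phiR hq hw).mono fun c hc => ha.trans hc.1)
    ⟨hφb, hφa⟩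

theorem gObjR_le_of_phiR_eq_zero (hq : 1 < q) (hlam : 0 ≤ lam) (hw : IsOmegaInv q v w)
    (hc : 0 ≤ c) (hφ : phiR q lam w c = 0) {x : Fin n → ℝ} (hx : ∀ i, 0 < x i)
    (hxeq : ∀ i, x i + c * x i ^ (q - 1) = v i) (y : Fin n → ℝ) :
    gObjR q lam v x ≤ gObjR q lam v y := by
  have hxw : x = fun i => w i c :=
    funext fun i => root_unique hq hc (hx i) (hw i c hc).1.1 (hxeq i) (hw i c hc).2
  subst hxw
  have := gObjR_add_half_sum_sq_le hq hlam hx hxeq (sub_eq_zero.1 hφ).symm y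
  have : 0 ≤ (1 / 2 : ℝ) * ∑ i, (y i - w i c) ^ 2 := by positivity
  linarith

lemma eq_of_phiR_eq_zero (hq : 1 < q) (hlam : 0 ≤ lam) (hw : IsOmegaInv q v w) {c₁ c₂ : ℝ}
    (hc₁ : 0 ≤ c₁) (hc₂ : 0 ≤ c₂) (h₁ : phiR q lam w c₁ = 0) (h₂ : phiR q lam w c₂ = 0) :
    c₁ = c₂ := by
  have hmin : ∀ {c c'}, 0 ≤ c → phiR q lam w c = 0 →
      gObjR q lam v (fun i => w i c) + (1 / 2) * ∑ i, (w i c' - w i c) ^ 2 ≤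
        gObjR q lam v (fun i => w i c') := fun hc h =>
    gObjR_add_half_sum_sq_le hq hlam (fun i => (hw i _ hc).1.1) (fun i => (hw i _ hc).2)
      (sub_eq_zero.1 h).symm _
  have h₁₂ := hmin (c' := c₂) hc₁ h₁
  have h₂₁ := hmin (c' := c₁) hc₂ h₂
  have hsq : ∑ i, (w i c₂ - w i c₁) ^ 2 = 0 :=
    le_antisymm (by linarith [sum_nonneg fun i (_ : i ∈ univ) => sq_nonneg (w i c₁ - w i c₂)])
      (sum_nonneg fun i _ => sq_nonneg _)
  have hweq (i) : w i c₁ = w i c₂ :=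
    (sub_eq_zero.1 ((pow_eq_zero_iff two_ne_zero).1
      ((sum_eq_zero_iff_of_nonneg fun i _ => sq_nonneg _).1 hsq i (mem_univ i)))).symm
  rw [← sub_eq_zero.1 h₁, ← sub_eq_zero.1 h₂]
  simp only [hweq]

end Phi

/-- Let `1 < q < ∞`, `v ∈ ℝⁿ` with `vᵢ > 0`, and `0 < λ < ‖v‖_{q̄}`
(`q̄ = q/(q−1)`).  Define `φ(c) = λ(∑ᵢ (ωᵢ⁻¹(c))^q)^{(1−q)/q} − c` for `c ≥ 0`,
where `ωᵢ⁻¹(c)` is the unique root in `(0, vᵢ]` of `x + c·x^{q−1} = vᵢ`, and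
let `c̲ ≤ c̄` be as in the text.  Then `φ` has exactly one root `c*` in
`[0, ∞)`, this root lies in `[c̲, c̄]`, and the unique vector `x` with
`0 < xᵢ < vᵢ` satisfying `xᵢ + c*·xᵢ^{q−1} = vᵢ` for all `i` is the minimizer
of `g(x) = (1/2)‖x − v‖₂² + λ‖x‖_q`. -/
theorem stmt9 {n : ℕ} [NeZero n] (q : ℝ) (hq : 1 < q)
    (v : Fin n → ℝ) (hv : ∀ i, 0 < v i) (lam : ℝ)
    (hlam : 0 < lam) (hlam' : lam < lqNormR (q / (q - 1)) v)
    (winv : Fin n → ℝ → ℝ)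
    (hwinv : ∀ i, ∀ c : ℝ, 0 ≤ c →
      winv i c ∈ Set.Ioc (0 : ℝ) (v i) ∧
        winv i c + c * winv i c ^ (q - 1) = v i) :
    let eps : ℝ := (lqNormR (q / (q - 1)) v - lam) / lqNormR (q / (q - 1)) v
    let cc : Fin n → ℝ := fun i => (v i - v i * eps) / (v i * eps) ^ (q - 1)
    let clow : ℝ := Finset.univ.inf' Finset.univ_nonempty cc
    let cbar : ℝ := Finset.univ.sup' Finset.univ_nonempty cc
    let phi : ℝ → ℝ := fun c => lam * (∑ i, winv i c ^ q) ^ ((1 - q) / q) - c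
    ∃ cstar : ℝ, cstar ∈ Set.Icc clow cbar ∧ phi cstar = 0 ∧
      (∀ c : ℝ, 0 ≤ c → phi c = 0 → c = cstar) ∧
      ∀ x : Fin n → ℝ,
        ((∀ i, x i ∈ Set.Ioo (0 : ℝ) (v i)) ∧
            ∀ i, x i + cstar * x i ^ (q - 1) = v i) →
          ∀ y : Fin n → ℝ, gObjR q lam v x ≤ gObjR q lam v y := by
  intro eps cc clow cbar phi
  have hN : 0 < lqNormR (q / (q - 1)) v := hlam.trans hlam'
  have heps : 0 < eps ∧ eps < 1 := ⟨div_pos (by linarith) hN, (div_lt_one hN).2 (by linarith)⟩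
  have hlam_eq : lqNormR (q / (q - 1)) (fun i => v i - v i * eps) = lam := by
    have h1 : 1 - eps = lam / lqNormR (q / (q - 1)) v := by
      simp only [eps]; field_simp; ring
    rw [show (fun i => v i - v i * eps) = fun i => (1 - eps) * v i from funext fun i => by ring,
      h1, lqNormR_const_mul (div_pos (by linarith) (by linarith)) (by positivity),
      div_mul_cancel₀ _ hN.ne']
  have hcc : ∀ i, 0 ≤ cc i ∧ v i * eps + cc i * (v i * eps) ^ (q - 1) = v i := fun i => by
    have hve : 0 < v i * eps := mul_pos (hv i) heps.1
    refine ⟨div_nonneg (by nlinarith [hv i]) (Real.rpow_nonneg hve.le _), ?_⟩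
    rw [div_mul_cancel₀ _ (Real.rpow_pos_of_pos hve _).ne', add_sub_cancel]
  have hclow : 0 ≤ clow := (le_inf'_iff _ _).2 fun i _ => (hcc i).1
  have hclow_le (i) : clow ≤ cc i := inf'_le _ (mem_univ i)
  have hle_cbar (i) : cc i ≤ cbar := le_sup' _ (mem_univ i)
  obtain ⟨cstar, hmem, hroot⟩ := exists_phiR_eq_zero hq hwinv hclow
    ((hclow_le 0).trans (hle_cbar 0))
    (fun i => root_antitone hq hclow (hclow_le i) (hwinv i clow hclow).1.1
      (hwinv i clow hclow).2 (hcc i).2)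
    (fun i => root_antitone hq (hcc i).1 (hle_cbar i) (mul_pos (hv i) heps.1) (hcc i).2
      (hwinv i cbar (hclow.trans ((hclow_le i).trans (hle_cbar i)))).2)
    hlam_eq
  have hcstar : 0 ≤ cstar := hclow.trans hmem.1
  refine ⟨cstar, hmem, hroot, fun c hc hφ => eq_of_phiR_eq_zero hq hlam.le hwinv hc hcstar hφ hroot,
    fun x hx => gObjR_le_of_phiR_eq_zero hq hlam.le hwinv hcstar hroot (fun i => (hx.1 i).1) hx.2⟩
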